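/- Let φ act on R^3 componentwise. Then for all u, v ∈ R^3, φ(u ⊠ v) = φ(u) ⊠ φ(v); that is, the product ⊠ is equivariant for the involution s ↦ q^{-1}s^{-1}. -/

import Mathlib

noncomputable section

open LaurentPolynomial

/-- `ℤ[q^{±1}]`, the ring of Laurent polynomials over `ℤ` in the variable `q`. -/
abbrev Rq : Type := LaurentPolynomial ℤ

/-- `R = ℤ[q^{±1}, s^{±1}]`, realized as Laurent polynomials in `s`
with coefficients in `ℤ[q^{±1}]`. -/
abbrev R2 : Type := LaurentPolynomial Rq

/-- The variable `q` of `R`. -/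
def q : R2 := C (T 1)
/-- The inverse `q⁻¹` of the variable `q`. -/
def qi : R2 := C (T (-1))
/-- The variable `s` of `R`. -/
def s : R2 := T 1
/-- The inverse `s⁻¹` of the variable `s`. -/
def si : R2 := T (-1)

/-- The coefficient of `s^k` in `f`, an element of `ℤ[q^{±1}]`. -/
def sCoeff (f : R2) (k : ℤ) : Rq := f.coeff k
/-- The coefficient of `q^k` in `g ∈ ℤ[q^{±1}]`. -/
def qCoeff (g : Rq) (k : ℤ) : ℤ := g.coeff k

/-- `deg_s f = d`: the largest exponent of `s` occurring in `f` is `d`. -/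
def sDegIs (f : R2) (d : ℤ) : Prop :=
  sCoeff f d ≠ 0 ∧ ∀ k : ℤ, d < k → sCoeff f k = 0

/-- `ldeg_s f = d`: the smallest exponent of `s` occurring in `f` is `d`. -/
def sLdegIs (f : R2) (d : ℤ) : Prop :=
  sCoeff f d ≠ 0 ∧ ∀ k : ℤ, k < d → sCoeff f k = 0

/-- `g ∈ ℤ[q^{±1}]` has `q`-degree `m` with leading coefficient `c`. -/
def qLeadIs (g : Rq) (m : ℤ) (c : ℤ) : Prop :=
  qCoeff g m = c ∧ c ≠ 0 ∧ ∀ k : ℤ, m < k → qCoeff g k = 0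

/-- Vectors in the free module `R^3` with basis `e1, e2, e3`. -/
abbrev V3 : Type := R2 × R2 × R2

/-- `e1 ⊠ e3 = aCoef · e1` where `aCoef = q^{-1}(s − s^{-1})(qs − q^{-1}s^{-1})`. -/
def aCoef : R2 := qi * (s - si) * (q * s - qi * si)
/-- `e1`-component of `e3 ⊠ e3`. -/
def X1 : R2 := (s^2 + qi^2*si^2) * (1 + qi^2) - 3*qi^2 - qi^4
/-- `e2`-component of `e3 ⊠ e3`. -/
def X2 : R2 := -(s^4 + qi^4*si^4) + (s^2 + qi^2*si^2) * (3 + qi^2) - 2 - 4*qi^2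
/-- `e3`-component of `e3 ⊠ e3`. -/
def X3 : R2 := 2*(s^2 + qi^2*si^2) - 3 - qi^2

/-- The commutative bilinear product `⊠` on `R^3` determined by
`e1⊠e1 = 0`, `e1⊠e2 = e1`, `e2⊠e2 = e2`, `e2⊠e3 = e3`, `e1⊠e3 = aCoef·e1`,
`e3⊠e3 = X1·e1 + X2·e2 + X3·e3`. -/
def boxt (u v : V3) : V3 :=
  (u.1 * v.2.1 + u.2.1 * v.1 + aCoef * (u.1 * v.2.2 + u.2.2 * v.1) + X1 * (u.2.2 * v.2.2),
   u.2.1 * v.2.1 + X2 * (u.2.2 * v.2.2),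
   u.2.1 * v.2.2 + u.2.2 * v.2.1 + X3 * (u.2.2 * v.2.2))

/-- First component of `TT⁺`. -/
def TTp1 : R2 :=
  (s^2 + qi^2*si^2) * (1 - 2*qi^2 + 2*qi^4 - 2*qi^6 + 4*qi^8 - 2*qi^10)
    - 2 + 3*qi^2 - 4*qi^4 + 4*qi^6 - 8*qi^8 + 4*qi^10
/-- Second component of `TT⁺`. -/
def TTp2 : R2 :=
  (s^4 + qi^4*si^4) * (2 - 2*qi^2 - 4*qi^6 + 4*qi^8)
    + (s^2 + qi^2*si^2) * (-5 + 4*qi^2 + 12*qi^6 - 8*qi^8 - 4*qi^10)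
    + 4 + 3*qi^2 - 6*qi^4 - 6*qi^6 - 8*qi^8 + 16*qi^10
/-- Third component of `TT⁺`. -/
def TTp3 : R2 :=
  (s^2 + qi^2*si^2) * (2*qi^2 - 2*qi^4 + 2*qi^6 - 4*qi^8 + 2*qi^10)
    + 1 - 4*qi^2 + 4*qi^4 - 4*qi^6 + 8*qi^8 - 4*qi^10
/-- First component of `TT⁻`. -/
def TTm1 : R2 :=
  (s^2 + qi^2*si^2) * (q^2 - 2 + 2*qi^2 - 2*qi^4 + 4*qi^6 - 2*qi^8)
    - 1 + 4*qi^2 - 4*qi^4 + 4*qi^6 - 8*qi^8 + 4*qi^10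
/-- Second component of `TT⁻`. -/
def TTm2 : R2 :=
  (s^4 + qi^4*si^4) * (2*q^2 - 2 - 4*qi^4 + 4*qi^6)
    + (s^2 + qi^2*si^2) * (-3*q^2 - 4 + 8*qi^2 + 4*qi^4 + 8*qi^6 - 12*qi^8)
    + q^2 + 10 - 6*qi^2 - 6*qi^4 - 16*qi^6 + 8*qi^8 + 8*qi^10
/-- Third component of `TT⁻`. -/
def TTm3 : R2 :=
  (s^2 + qi^2*si^2) * (2 - 2*qi^2 + 2*qi^4 - 4*qi^6 + 2*qi^8)
    - q^2 - 4*qi^2 + 4*qi^4 - 4*qi^6 + 8*qi^8 - 4*qi^10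

/-- The vector `TT⁺ = TT⁺_1·e1 + TT⁺_2·e2 + TT⁺_3·e3`. -/
def TTp : V3 := (TTp1, TTp2, TTp3)
/-- The vector `TT⁻ = TT⁻_1·e1 + TT⁻_2·e2 + TT⁻_3·e3`. -/
def TTm : V3 := (TTm1, TTm2, TTm3)

/-- `T := TT⁺ ⊠ TT⁻`. -/
def Tvec : V3 := boxt TTp TTm

/-- Iterated powers `T^{⊠n}`: `T^{⊠1} = T` and `T^{⊠(n+1)} = T^{⊠n} ⊠ T`.
(`Tpow 0` is set to `e2`, which is a two-sided identity for `⊠`, so that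
`Tpow 1 = T` holds definitionally.) -/
def Tpow : ℕ → V3
  | 0 => (0, 1, 0)
  | n + 1 => boxt (Tpow n) Tvec

/-- `AS*(e1)`, the Links–Gould polynomial of the connected sum of two Hopf links. -/
def AS1 : R2 :=
  (s^6 + qi^6*si^6) - (s^4 + qi^4*si^4) * (1 + qi^2)
    + (s^2 + qi^2*si^2) * (1 + 2*qi^2) - 1 - 2*qi^2 - qi^4
/-- `AS*(e2)`. -/
def AS2 : R2 :=
  (s^4 + qi^4*si^4) - (s^2 + qi^2*si^2) * (2 + 2*qi^2) + 1 + 4*qi^2 + qi^4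
/-- `AS*(e3)`. -/
def AS3 : R2 :=
  (s^6 + qi^6*si^6) * (3 + qi^2) - (s^4 + qi^4*si^4) * (7 + 8*qi^2 + qi^4)
    + (s^2 + qi^2*si^2) * (7 + 18*qi^2 + 7*qi^4) - 3 - 18*qi^2 - 17*qi^4 - 2*qi^6

/-- The `R`-linear map `AS* : R^3 → R`. -/
def ASstar (u : V3) : R2 := u.1 * AS1 + u.2.1 * AS2 + u.2.2 * AS3

/-- `P_n := AS*(T^{⊠n})`, the Links–Gould polynomial of the `n`-th Allen–Swenberg link. -/
def P (n : ℕ) : R2 := ASstar (Tpow n)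

/-- The componentwise action of `φ` on `R^3`. -/
def phi3 (φ : R2 ≃+* R2) (u : V3) : V3 := (φ u.1, φ u.2.1, φ u.2.2)

/-! A ring automorphism with `q ↦ q` and `s ↦ q⁻¹s⁻¹` interchanges `s` and `q⁻¹s⁻¹`, so it fixes
every `sⁿ + q⁻ⁿs⁻ⁿ` and `q⁻¹`. All structure constants of `⊠` are polynomials in these (for
`aCoef` after expanding: `aCoef = s² + q⁻²s⁻² - 1 - q⁻²`), hence fixed by `φ`, and a ring
automorphism fixing the structure constants of a bilinear product commutes with it. -/

lemma q_mul_qi : q * qi = 1 := by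
  rw [q, qi, ← map_mul, ← T_add]
  norm_num

lemma s_mul_si : s * si = 1 := by
  rw [s, si, ← T_add]
  norm_num

lemma aCoef_eq : aCoef = s ^ 2 + qi ^ 2 * si ^ 2 - 1 - qi ^ 2 := by
  unfold aCoef
  linear_combination (s ^ 2 - 1) * q_mul_qi - (qi ^ 2 + q * qi) * s_mul_si

lemma phi3_boxt_of_map_eq {φ : R2 ≃+* R2} (ha : φ aCoef = aCoef) (h1 : φ X1 = X1)
    (h2 : φ X2 = X2) (h3 : φ X3 = X3) (u v : V3) :
    phi3 φ (boxt u v) = boxt (phi3 φ u) (phi3 φ v) := by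
  simp only [phi3, boxt, map_add, map_mul, ha, h1, h2, h3]

section Involution

variable {φ : R2 ≃+* R2} (hq : φ q = q) (hs : φ s = qi * si)
include hq

lemma map_qi_of_map_q : φ qi = qi :=
  left_inv_eq_right_inv (by rw [← hq, ← map_mul, mul_comm, q_mul_qi, map_one]) q_mul_qi

include hs

lemma map_qi_mul_si : φ (qi * si) = s := by
  have hsi : φ si = q * s :=
    left_inv_eq_right_inv (a := qi * si) (by rw [← hs, ← map_mul, mul_comm, s_mul_si, map_one])
      (by linear_combination (s * si) * q_mul_qi + s_mul_si)
  rw [map_mul, map_qi_of_map_q hq, hsi]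
  linear_combination s * q_mul_qi

lemma map_pow_add_qi_pow_mul_si_pow (n : ℕ) :
    φ (s ^ n + qi ^ n * si ^ n) = s ^ n + qi ^ n * si ^ n := by
  rw [← mul_pow, map_add, map_pow, map_pow, hs, map_qi_mul_si hq hs, add_comm]

end Involution

/-- the product `⊠` is equivariant for the involution `s ↦ q⁻¹s⁻¹`
acting componentwise on `R^3`: `φ(u ⊠ v) = φ(u) ⊠ φ(v)`. -/
theorem boxt_equivariant (φ : R2 ≃+* R2) (hq : φ q = q) (hs : φ s = qi * si) :
    ∀ u v : V3, phi3 φ (boxt u v) = boxt (phi3 φ u) (phi3 φ v) := by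
  have hqi := map_qi_of_map_q hq
  have h2 := map_pow_add_qi_pow_mul_si_pow hq hs 2
  have h4 := map_pow_add_qi_pow_mul_si_pow hq hs 4
  refine phi3_boxt_of_map_eq ?_ ?_ ?_ ?_ <;>
    simp only [aCoef_eq, X1, X2, X3, map_add, map_sub, map_neg, map_mul, map_pow, map_one,
      map_ofNat, h2, h4, hqi]
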